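/- Let F : ℝ → ℂ be four times continuously differentiable on [0,h] with all derivatives up to order 4 bounded by M, and let p be the cubic Hermite interpolant of F at the endpoints. Then there is a constant C depending only on M (not on h or ω) such that for every ω > 0 and nonzero integer n, ‖∫₀^h (F − p)(τ) e^{i n ω τ} dτ‖ ≤ C · min(h⁵, h³/ω²). -/

import Mathlib

/-!
The error `e = F - p` vanishes with its first derivative at both endpoints and has
`‖e⁽⁴⁾‖ ≤ M`. Taylor expansion at `0` with the crude remainder bounds `M h⁴⁻ᵏ` for `e⁽ᵏ⁾`,
evaluated at `h`, gives a linear system for `e''(0)` and `e'''(0)` whose solution is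
`O(M h²)` and `O(M h)`; hence `‖e‖ ≤ 9 M h⁴` and `‖e''‖ ≤ 29 M h²` on `[0, h]`.
The first bound, integrated, gives `h⁵`; two integrations by parts, whose boundary terms vanish,
give `‖z‖⁻² ∫ ‖e''‖ ≤ 29 M h³ / ω²` for `z = i n ω`.
-/

open Complex Set Polynomial intervalIntegral MeasureTheory
open scoped Interval

section HermiteError

variable {E : Type*} [NormedAddCommGroup E] [NormedSpace ℝ E] {h M : ℝ}

theorem norm_le_mul_of_hasDerivWithinAt_Icc {f f' : ℝ → E} {B : ℝ}
    (hf : ∀ t ∈ Icc 0 h, HasDerivWithinAt f (f' t) (Icc 0 h) t) (hf0 : f 0 = 0)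
    (hB : ∀ t ∈ Icc 0 h, ‖f' t‖ ≤ B) {t : ℝ} (ht : t ∈ Icc 0 h) : ‖f t‖ ≤ B * h := by
  have hmvt := norm_image_sub_le_of_norm_deriv_le_segment' hf
    (fun x hx => hB x (Ico_subset_Icc_self hx)) t ht
  rw [hf0, sub_zero, sub_zero] at hmvt
  exact hmvt.trans (mul_le_mul_of_nonneg_left ht.2 ((norm_nonneg _).trans (hB t ht)))

theorem hasDerivAt_sq_div_two_smul (v : E) (t : ℝ) :
    HasDerivAt (fun x : ℝ => (x ^ 2 / 2) • v) (t • v) t := by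
  convert ((hasDerivAt_pow 2 t).div_const 2).smul_const v using 2
  ring

theorem hasDerivAt_cube_div_six_smul (v : E) (t : ℝ) :
    HasDerivAt (fun x : ℝ => (x ^ 3 / 6) • v) ((t ^ 2 / 2) • v) t := by
  convert ((hasDerivAt_pow 3 t).div_const 6).smul_const v using 2
  ring

variable {e : ℕ → ℝ → E}

theorem norm_taylor_remainders_le
    (he : ∀ k < 4, ∀ t ∈ Icc 0 h, HasDerivWithinAt (e k) (e (k + 1) t) (Icc 0 h) t)
    (hM : ∀ t ∈ Icc 0 h, ‖e 4 t‖ ≤ M) (h00 : e 0 0 = 0) (h10 : e 1 0 = 0)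
    {t : ℝ} (ht : t ∈ Icc 0 h) :
    ‖e 2 t - e 2 0 - t • e 3 0‖ ≤ M * h ^ 2 ∧
      ‖e 1 t - t • e 2 0 - (t ^ 2 / 2) • e 3 0‖ ≤ M * h ^ 3 ∧
      ‖e 0 t - (t ^ 2 / 2) • e 2 0 - (t ^ 3 / 6) • e 3 0‖ ≤ M * h ^ 4 := by
  have hlin (v : E) (x : ℝ) : HasDerivAt (fun y : ℝ => y • v) v x := by
    simpa using (hasDerivAt_id x).smul_const v
  have r₃ : ∀ t ∈ Icc 0 h, ‖e 3 t - e 3 0‖ ≤ M * h :=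
    fun t ht => norm_le_mul_of_hasDerivWithinAt_Icc
      (fun x hx => (he 3 (by norm_num) x hx).sub_const _) (sub_self _) hM ht
  have r₂ : ∀ t ∈ Icc 0 h, ‖e 2 t - e 2 0 - t • e 3 0‖ ≤ M * h * h :=
    fun t ht => norm_le_mul_of_hasDerivWithinAt_Icc
      (fun x hx => ((he 2 (by norm_num) x hx).sub_const _).sub (hlin _ x).hasDerivWithinAt)
      (by simp) r₃ ht
  have r₁ : ∀ t ∈ Icc 0 h, ‖e 1 t - t • e 2 0 - (t ^ 2 / 2) • e 3 0‖ ≤ M * h * h * h :=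
    fun t ht => norm_le_mul_of_hasDerivWithinAt_Icc
      (fun x hx => ((he 1 (by norm_num) x hx).sub (hlin _ x).hasDerivWithinAt).sub
        (hasDerivAt_sq_div_two_smul _ x).hasDerivWithinAt)
      (by simp [h10]) r₂ ht
  have r₀ : ‖e 0 t - (t ^ 2 / 2) • e 2 0 - (t ^ 3 / 6) • e 3 0‖ ≤ M * h * h * h * h :=
    norm_le_mul_of_hasDerivWithinAt_Icc
      (fun x hx => ((he 0 (by norm_num) x hx).sub
        (hasDerivAt_sq_div_two_smul _ x).hasDerivWithinAt).sub
        (hasDerivAt_cube_div_six_smul _ x).hasDerivWithinAt)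
      (by simp [h00]) r₁ ht
  refine ⟨(r₂ t ht).trans_eq (by ring), (r₁ t ht).trans_eq (by ring), r₀.trans_eq (by ring)⟩

theorem norm_hermite_coeffs_le {A B : E} (hh : 0 < h)
    (h₀ : ‖(h ^ 2 / 2) • A + (h ^ 3 / 6) • B‖ ≤ M * h ^ 4)
    (h₁ : ‖h • A + (h ^ 2 / 2) • B‖ ≤ M * h ^ 3) :
    ‖A‖ ≤ 10 * M * h ^ 2 ∧ ‖B‖ ≤ 18 * M * h := by
  have hB : h ^ 3 • B = (6 * h) • (h • A + (h ^ 2 / 2) • B)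
      - (12 : ℝ) • ((h ^ 2 / 2) • A + (h ^ 3 / 6) • B) := by
    module
  have nB : ‖B‖ ≤ 18 * M * h := by
    refine le_of_mul_le_mul_left ?_ (pow_pos hh 3)
    calc h ^ 3 * ‖B‖ = ‖h ^ 3 • B‖ := by rw [norm_smul, Real.norm_of_nonneg (by positivity)]
      _ ≤ 6 * h * (M * h ^ 3) + 12 * (M * h ^ 4) := by
        rw [hB]
        refine (norm_sub_le _ _).trans (add_le_add ?_ ?_) <;>
          rw [norm_smul, Real.norm_of_nonneg (by positivity)] <;> gcongr
      _ = h ^ 3 * (18 * M * h) := by ring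
  have hA : h • A = (h • A + (h ^ 2 / 2) • B) - (h ^ 2 / 2) • B := by abel
  refine ⟨le_of_mul_le_mul_left ?_ hh, nB⟩
  calc h * ‖A‖ = ‖h • A‖ := by rw [norm_smul, Real.norm_of_nonneg hh.le]
    _ ≤ M * h ^ 3 + h ^ 2 / 2 * (18 * M * h) := by
      rw [hA]
      refine (norm_sub_le _ _).trans (add_le_add h₁ ?_)
      rw [norm_smul, Real.norm_of_nonneg (by positivity)]
      gcongr
    _ = h * (10 * M * h ^ 2) := by ring

theorem norm_hermite_error_le (hh : 0 < h)
    (he : ∀ k < 4, ∀ t ∈ Icc 0 h, HasDerivWithinAt (e k) (e (k + 1) t) (Icc 0 h) t)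
    (hM : ∀ t ∈ Icc 0 h, ‖e 4 t‖ ≤ M) (h00 : e 0 0 = 0) (h0h : e 0 h = 0)
    (h10 : e 1 0 = 0) (h1h : e 1 h = 0) {t : ℝ} (ht : t ∈ Icc 0 h) :
    ‖e 0 t‖ ≤ 9 * M * h ^ 4 ∧ ‖e 2 t‖ ≤ 29 * M * h ^ 2 := by
  obtain ⟨-, r₁, r₀⟩ := norm_taylor_remainders_le he hM h00 h10 ⟨hh.le, le_rfl⟩
  rw [h1h, zero_sub, ← neg_add', norm_neg] at r₁
  rw [h0h, zero_sub, ← neg_add', norm_neg] at r₀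
  obtain ⟨hA, hB⟩ := norm_hermite_coeffs_le hh r₀ r₁
  obtain ⟨r₂, -, r₀⟩ := norm_taylor_remainders_le he hM h00 h10 ht
  obtain ⟨ht0, hth⟩ := ht
  constructor
  · calc ‖e 0 t‖ = ‖(e 0 t - (t ^ 2 / 2) • e 2 0 - (t ^ 3 / 6) • e 3 0)
          + (t ^ 2 / 2) • e 2 0 + (t ^ 3 / 6) • e 3 0‖ := by abel_nf
      _ ≤ M * h ^ 4 + h ^ 2 / 2 * (10 * M * h ^ 2) + h ^ 3 / 6 * (18 * M * h) := by
        refine (norm_add₃_le).trans (add_le_add (add_le_add r₀ ?_) ?_) <;>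
          rw [norm_smul, Real.norm_of_nonneg (by positivity)] <;> gcongr
      _ = 9 * M * h ^ 4 := by ring
  · calc ‖e 2 t‖ = ‖(e 2 t - e 2 0 - t • e 3 0) + e 2 0 + t • e 3 0‖ := by abel_nf
      _ ≤ M * h ^ 2 + 10 * M * h ^ 2 + h * (18 * M * h) := by
        refine (norm_add₃_le).trans (add_le_add (add_le_add r₂ hA) ?_)
        rw [norm_smul, Real.norm_of_nonneg ht0]
        gcongr
      _ = 29 * M * h ^ 2 := by ring

end HermiteError

theorem hasDerivAt_cexp_mul_ofReal_div (c : ℂ) (x : ℝ) (hc : c ≠ 0) :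
    HasDerivAt (fun y : ℝ => cexp (c * y) / c) (cexp (c * x)) x := by
  have := (((hasDerivAt_id (x : ℂ)).const_mul c).cexp.div_const c).comp_ofReal
  simpa [mul_div_cancel_left₀ _ hc, mul_comm] using this

theorem integral_mul_cexp_eq_neg_integral_deriv_div {f f' : ℝ → ℂ} {a b : ℝ} {c : ℂ}
    (hc : c ≠ 0) (hab : a ≤ b)
    (hf : ∀ x ∈ Icc a b, HasDerivWithinAt f (f' x) (Icc a b) x)
    (hf' : ContinuousOn f' (Icc a b)) (ha : f a = 0) (hb : f b = 0) :
    ∫ x in a..b, f x * cexp (c * x) = -(∫ x in a..b, f' x * cexp (c * x)) / c := by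
  rw [← uIcc_of_le hab] at hf hf'
  have hibp := integral_mul_deriv_eq_deriv_mul_of_hasDerivWithinAt hf
    (fun x _ => (hasDerivAt_cexp_mul_ofReal_div c x hc).hasDerivWithinAt)
    hf'.intervalIntegrable
    ((by fun_prop : Continuous fun x : ℝ => cexp (c * x)).intervalIntegrable _ _)
  simp_rw [hibp, ha, hb, zero_mul, sub_zero, zero_sub, mul_div_assoc',
    intervalIntegral.integral_div, neg_div]

theorem norm_integral_mul_cexp_le {f : ℝ → ℂ} {a b B : ℝ} {c : ℂ} (hc : c.re = 0)
    (hf : ∀ x ∈ Ι a b, ‖f x‖ ≤ B) : ‖∫ x in a..b, f x * cexp (c * x)‖ ≤ B * |b - a| := by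
  refine norm_integral_le_of_norm_le_const fun x hx => ?_
  rw [norm_mul, norm_exp]
  simpa [hc] using hf x hx

theorem norm_integral_mul_cexp_le_of_hasDerivWithinAt {f f' f'' : ℝ → ℂ} {a b B : ℝ} {c : ℂ}
    (hc0 : c ≠ 0) (hc : c.re = 0) (hab : a ≤ b)
    (hf : ∀ x ∈ Icc a b, HasDerivWithinAt f (f' x) (Icc a b) x)
    (hf' : ∀ x ∈ Icc a b, HasDerivWithinAt f' (f'' x) (Icc a b) x)
    (hf'' : ContinuousOn f'' (Icc a b))
    (ha : f a = 0) (hb : f b = 0) (ha' : f' a = 0) (hb' : f' b = 0)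
    (hB : ∀ x ∈ Icc a b, ‖f'' x‖ ≤ B) :
    ‖∫ x in a..b, f x * cexp (c * x)‖ ≤ B * (b - a) / ‖c‖ ^ 2 := by
  have hcont' : ContinuousOn f' (Icc a b) := fun x hx => (hf' x hx).continuousWithinAt
  rw [integral_mul_cexp_eq_neg_integral_deriv_div hc0 hab hf hcont' ha hb,
    integral_mul_cexp_eq_neg_integral_deriv_div hc0 hab hf' hf'' ha' hb', norm_div, norm_neg,
    norm_div, norm_neg, div_div, ← sq, ← abs_of_nonneg (sub_nonneg.2 hab)]
  gcongr
  refine norm_integral_mul_cexp_le hc fun x hx => hB x ?_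
  rw [uIoc_of_le hab] at hx
  exact Ioc_subset_Icc_self hx

theorem norm_integral_hermite_error_mul_cexp_le {h M : ℝ} {e : ℕ → ℝ → ℂ} (hh : 0 < h)
    (he : ∀ k < 4, ∀ t ∈ Icc 0 h, HasDerivWithinAt (e k) (e (k + 1) t) (Icc 0 h) t)
    (hM : ∀ t ∈ Icc 0 h, ‖e 4 t‖ ≤ M) (h00 : e 0 0 = 0) (h0h : e 0 h = 0)
    (h10 : e 1 0 = 0) (h1h : e 1 h = 0) {z : ℂ} (hz0 : z ≠ 0) (hz : z.re = 0) :
    ‖∫ t in (0:ℝ)..h, e 0 t * cexp (z * t)‖ ≤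
      min (9 * M * h ^ 5) (29 * M * h ^ 3 / ‖z‖ ^ 2) := by
  have hbound (t : ℝ) (ht : t ∈ Icc 0 h) := norm_hermite_error_le hh he hM h00 h0h h10 h1h ht
  refine le_min ?_ ?_
  · calc _ ≤ 9 * M * h ^ 4 * |h - 0| := norm_integral_mul_cexp_le hz fun t ht => ?_
      _ = 9 * M * h ^ 5 := by rw [sub_zero, abs_of_pos hh]; ring
    rw [uIoc_of_le hh.le] at ht
    exact (hbound t (Ioc_subset_Icc_self ht)).1
  · calc _ ≤ 29 * M * h ^ 2 * (h - 0) / ‖z‖ ^ 2 :=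
          norm_integral_mul_cexp_le_of_hasDerivWithinAt hz0 hz hh.le (he 0 (by norm_num))
            (he 1 (by norm_num)) (fun t ht => (he 2 (by norm_num) t ht).continuousWithinAt)
            h00 h0h h10 h1h fun t ht => (hbound t ht).2
      _ = 29 * M * h ^ 3 / ‖z‖ ^ 2 := by ring

theorem ContDiffOn.hasDerivWithinAt_iteratedDerivWithin {𝕜 F : Type*}
    [NontriviallyNormedField 𝕜] [NormedAddCommGroup F] [NormedSpace 𝕜 F]
    {f : 𝕜 → F} {s : Set 𝕜} {n k : ℕ}
    (hf : ContDiffOn 𝕜 n f s) (hs : UniqueDiffOn 𝕜 s) (hk : k < n) {x : 𝕜} (hx : x ∈ s) :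
    HasDerivWithinAt (iteratedDerivWithin k f s) (iteratedDerivWithin (k + 1) f s x) s x := by
  rw [iteratedDerivWithin_succ]
  exact (hf.differentiableOn_iteratedDerivWithin (by exact_mod_cast hk) hs x hx).hasDerivWithinAt

theorem Polynomial.hasDerivAt_iterate_derivative_eval_ofReal (P : ℂ[X]) (k : ℕ) (x : ℝ) :
    HasDerivAt (fun y : ℝ => (derivative^[k] P).eval (y : ℂ))
      ((derivative^[k + 1] P).eval (x : ℂ)) x := by
  rw [Function.iterate_succ_apply']
  exact ((derivative^[k] P).hasDerivAt (x : ℂ)).comp_ofReal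

theorem exists_hermite_error_derivs {h M : ℝ} (hh : 0 < h) {F p : ℝ → ℂ}
    (hF : ContDiffOn ℝ 4 F (Icc 0 h))
    (hFM : ∀ t ∈ Icc 0 h, ‖iteratedDerivWithin 4 F (Icc 0 h) t‖ ≤ M)
    {P : ℂ[X]} (hP : P.natDegree < 4) (hp : ∀ t : ℝ, p t = P.eval (t : ℂ)) :
    ∃ e : ℕ → ℝ → ℂ,
      (∀ k < 4, ∀ t ∈ Icc 0 h, HasDerivWithinAt (e k) (e (k + 1) t) (Icc 0 h) t) ∧
      (∀ t ∈ Icc 0 h, ‖e 4 t‖ ≤ M) ∧ (∀ t, e 0 t = F t - p t) ∧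
      (∀ t, e 1 t = derivWithin F (Icc 0 h) t - deriv p t) := by
  refine ⟨fun k t => iteratedDerivWithin k F (Icc 0 h) t - (derivative^[k] P).eval (t : ℂ),
    fun k hk t ht => ?_, fun t ht => ?_, fun t => by simp [hp], fun t => ?_⟩
  · exact (hF.hasDerivWithinAt_iteratedDerivWithin (uniqueDiffOn_Icc hh) hk ht).sub
      (P.hasDerivAt_iterate_derivative_eval_ofReal k t).hasDerivWithinAt
  · simpa only [iterate_derivative_eq_zero hP, eval_zero, sub_zero] using hFM t ht
  · rw [funext hp, ((P.hasDerivAt (t : ℂ)).comp_ofReal).deriv]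
    simp [iteratedDerivWithin_one]

theorem filon_hermite_full_bound (M : ℝ) (hM0 : 0 ≤ M) :
    ∃ C : ℝ, 0 < C ∧
      ∀ (h : ℝ), 0 < h → ∀ (F p : ℝ → ℂ),
        ContDiffOn ℝ 4 F (Icc (0:ℝ) h) →
        (∀ k ≤ 4, ∀ τ ∈ Icc (0:ℝ) h,
          ‖iteratedDerivWithin k F (Icc (0:ℝ) h) τ‖ ≤ M) →
        -- p is a cubic polynomial
        (∃ a b c d : ℂ, ∀ τ : ℝ, p τ = a + b * τ + c * τ ^ 2 + d * τ ^ 3) →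
        -- Hermite interpolation conditions at the endpoints
        p 0 = F 0 → p h = F h →
        deriv p 0 = derivWithin F (Icc (0:ℝ) h) 0 →
        deriv p h = derivWithin F (Icc (0:ℝ) h) h →
        ∀ (ω : ℝ), 0 < ω → ∀ (n : ℤ), n ≠ 0 →
          ‖∫ τ in (0:ℝ)..h, (F τ - p τ) * Complex.exp (Complex.I * n * ω * τ)‖ ≤
            C * min (h ^ 5) (h ^ 3 / ω ^ 2) := by
  refine ⟨29 * M + 1, by positivity, ?_⟩
  rintro h hh F p hF hFM ⟨a, b, c, d, hp⟩ hp0 hph hp'0 hp'h ω hω n hn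
  obtain ⟨e, he, he4, he0, he1⟩ := exists_hermite_error_derivs hh hF (hFM 4 le_rfl)
    (P := C a + C b * X + C c * X ^ 2 + C d * X ^ 3) (by compute_degree!)
    fun t => (hp t).trans (by simp)
  set z : ℂ := I * n * ω
  have hz : ω ≤ ‖z‖ := by
    rw [norm_mul, norm_mul, norm_I, one_mul, norm_real, Real.norm_of_nonneg hω.le, norm_intCast]
    exact le_mul_of_one_le_left hω.le (by exact_mod_cast Int.one_le_abs hn)
  have hI : ∫ τ in (0:ℝ)..h, (F τ - p τ) * cexp (I * n * ω * τ) =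
      ∫ τ in (0:ℝ)..h, e 0 τ * cexp (z * τ) := by simp only [he0]; rfl
  rw [hI, mul_min_of_nonneg _ _ (by positivity)]
  refine (norm_integral_hermite_error_mul_cexp_le hh he he4 (by rw [he0, hp0, sub_self])
    (by rw [he0, hph, sub_self]) (by rw [he1, hp'0, sub_self]) (by rw [he1, hp'h, sub_self])
    (norm_pos_iff.1 (hω.trans_le hz)) (by simp [z])).trans (min_le_min ?_ ?_)
  · nlinarith [pow_pos hh 5]
  · rw [mul_div_assoc]
    gcongr
    linarith
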